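/- arXiv:2308.07866 — 3 statements merged into one kernel-verified Lean document; each statement's English description precedes it below -/
import Mathlib

section
/- Let G be a locally compact, second countable, Hausdorff topological group and let U ⊆ G be a nonempty open set. Then the set of all U-separated closed subsets of G is closed in 𝒞(G) with respect to the Fell topology. In particular, the limit in the Fell topology of a sequence of U-separated closed subsets is U-separated. -/
open Set Topology Filter

/-- The space of closed subsets of a topological space `X`. -/
structure ClosedSubsets (X : Type*) [TopologicalSpace X] where
  carrier : Set X
  isClosed' : IsClosed carrier

namespace ClosedSubsets

variable {X : Type*} [TopologicalSpace X]

/-- The Fell topology on the space of closed subsets. -/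
instance : TopologicalSpace (ClosedSubsets X) :=
  TopologicalSpace.generateFrom
    {U | ∃ (K : Set X) (𝓕 : Set (Set X)), IsCompact K ∧ 𝓕.Finite ∧
      (∀ F ∈ 𝓕, IsOpen F ∧ F.Nonempty) ∧
      U = {Y : ClosedSubsets X | Y.carrier ∩ K = ∅ ∧ ∀ F ∈ 𝓕, (Y.carrier ∩ F).Nonempty}}

end ClosedSubsets

variable {G : Type*} [Group G] [TopologicalSpace G] [IsTopologicalGroup G]

/-- The right action `g • C = C g⁻¹` of a topological group on its closed subsets. -/
def ClosedSubsets.smul (g : G) (C : ClosedSubsets G) : ClosedSubsets G :=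
  ⟨(fun x => x * g⁻¹) '' C.carrier, by
    simpa using (Homeomorph.mulRight g⁻¹).isClosedMap _ C.isClosed'⟩

/-- A closed set `L` is `S`-separated if `|L ∩ g·S| ≤ 1` for all `g`. -/
def SSeparated (S L : Set G) : Prop :=
  ∀ g : G, (L ∩ (fun x => x * g⁻¹) '' S).Subsingleton

/-- A closed set is uniformly separated if it is `U`-separated for some nonempty open `U`. -/
def UniformlySeparated (L : Set G) : Prop :=
  ∃ U : Set G, IsOpen U ∧ U.Nonempty ∧ SSeparated U L

/-- The hull of `L`: the closure of its orbit in the Fell topology. -/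
def hull (L : ClosedSubsets G) : Set (ClosedSubsets G) :=
  closure {C | ∃ g : G, C = ClosedSubsets.smul g L}

/-- The standard transversal of `L`. -/
def transversal (L : ClosedSubsets G) : Set (ClosedSubsets G) :=
  {L' | L' ∈ hull L ∧ (1 : G) ∈ L'.carrier}

/-!
Failing to be `U`-separated means that some translate `U g⁻¹` meets `L` in two distinct points
`x ≠ y`. Separating them by disjoint open sets `u ∋ x`, `v ∋ y`, every closed set meeting both
`u ∩ U g⁻¹` and `v ∩ U g⁻¹` also fails; this is a Fell-open condition, so the complement of the
set of `U`-separated closed sets is open.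
-/

namespace ClosedSubsets

variable {X : Type*} [TopologicalSpace X]

theorem isOpen_setOf_inter_nonempty {V : Set X} (hV : IsOpen V) :
    IsOpen {Y : ClosedSubsets X | (Y.carrier ∩ V).Nonempty} := by
  rcases V.eq_empty_or_nonempty with rfl | hVne
  · simp
  apply TopologicalSpace.isOpen_generateFrom_of_mem
  refine ⟨∅, {V}, isCompact_empty, finite_singleton V, by simp [hV, hVne], ?_⟩
  simp

theorem isClosed_setOf_inter_subsingleton [T2Space X] {W : Set X} (hW : IsOpen W) :
    IsClosed {Y : ClosedSubsets X | (Y.carrier ∩ W).Subsingleton} := by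
  refine isOpen_compl_iff.mp (isOpen_iff_forall_mem_open.mpr fun L hL => ?_)
  obtain ⟨x, ⟨hxL, hxW⟩, y, ⟨hyL, hyW⟩, hxy⟩ := not_subsingleton_iff.mp hL
  obtain ⟨u, v, hu, hv, hxu, hyv, huv⟩ := t2_separation hxy
  refine ⟨{Y | (Y.carrier ∩ (u ∩ W)).Nonempty} ∩ {Y | (Y.carrier ∩ (v ∩ W)).Nonempty},
    ?_, (isOpen_setOf_inter_nonempty (hu.inter hW)).inter
      (isOpen_setOf_inter_nonempty (hv.inter hW)), ⟨x, hxL, hxu, hxW⟩, ⟨y, hyL, hyv, hyW⟩⟩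
  rintro Y ⟨⟨a, haY, hau, haW⟩, ⟨b, hbY, hbv, hbW⟩⟩ hY
  exact huv.ne_of_mem hau hbv (hY ⟨haY, haW⟩ ⟨hbY, hbW⟩)

end ClosedSubsets

theorem isClosed_setOf_sSeparated_general (G : Type*) [Group G] [TopologicalSpace G]
    [IsTopologicalGroup G] [T2Space G]
    (U : Set G) (hUopen : IsOpen U) :
    IsClosed {L : ClosedSubsets G | SSeparated U L.carrier} ∧
    (∀ (Ln : ℕ → ClosedSubsets G) (L : ClosedSubsets G),
      (∀ n, SSeparated U (Ln n).carrier) →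
      Filter.Tendsto Ln Filter.atTop (nhds L) → SSeparated U L.carrier) := by
  have hclosed : IsClosed {L : ClosedSubsets G | SSeparated U L.carrier} := by
    simp only [SSeparated, ofPred_forall]
    exact isClosed_iInter fun g =>
      ClosedSubsets.isClosed_setOf_inter_subsingleton (isOpenMap_mul_right g⁻¹ U hUopen)
  exact ⟨hclosed, fun Ln L hLn hlim => hclosed.mem_of_tendsto hlim (.of_forall hLn)⟩

/-- For a lcsc Hausdorff topological group `G` and a nonempty open `U ⊆ G`, the
set of `U`-separated closed subsets is closed in the Fell topology; in particular the Fell limit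
of a sequence of `U`-separated closed sets is `U`-separated. -/
theorem isClosed_setOf_sSeparated (G : Type*) [Group G] [TopologicalSpace G]
    [IsTopologicalGroup G] [LocallyCompactSpace G] [SecondCountableTopology G] [T2Space G]
    (U : Set G) (hUopen : IsOpen U) (hUne : U.Nonempty) :
    IsClosed {L : ClosedSubsets G | SSeparated U L.carrier} ∧
    (∀ (Ln : ℕ → ClosedSubsets G) (L : ClosedSubsets G),
      (∀ n, SSeparated U (Ln n).carrier) →
      Filter.Tendsto Ln Filter.atTop (nhds L) → SSeparated U L.carrier) :=
  isClosed_setOf_sSeparated_general G U hUopen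
end

section
/- Let G be a locally compact, second countable, Hausdorff topological group, let U ⊆ G be a nonempty open set, and let L be a U-separated closed subset of G. Then every element of the hull Ω_L is U-separated. -/
open Set Topology Filter

variable {G : Type*} [Group G] [TopologicalSpace G] [IsTopologicalGroup G]

/-! Failure of `U`-separation is witnessed by two distinct points of `C` in one translate `Ug⁻¹`;
separating them by disjoint open sets `V`, `W`, every closed set meeting both `V ∩ Ug⁻¹` and
`W ∩ Ug⁻¹` also fails, and meeting an open set is a Fell-open condition. So separation is a closed
condition on `𝒞(G)`; being invariant under translation, it passes from the orbit of `L` to its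
closure. -/

theorem SSeparated.image_mul_right {G : Type*} [Group G] {S L : Set G} (hL : SSeparated S L)
    (h : G) : SSeparated S ((· * h⁻¹) '' L) := by
  intro g
  have translate : (· * h⁻¹) '' L ∩ (· * g⁻¹) '' S =
      (· * h⁻¹) '' (L ∩ (· * (h⁻¹ * g)⁻¹) '' S) := by
    rw [image_inter (mul_left_injective h⁻¹), image_image]
    simp only [mul_inv_rev, inv_inv, mul_assoc, mul_inv_cancel, mul_one]
  rw [translate]
  exact (hL _).image _

theorem ClosedSubsets.isOpen_setOf_inter_nonempty_s5 {X : Type*} [TopologicalSpace X] {F : Set X}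
    (hF : IsOpen F) : IsOpen {Y : ClosedSubsets X | (Y.carrier ∩ F).Nonempty} := by
  rcases F.eq_empty_or_nonempty with rfl | hFne
  · simp
  apply TopologicalSpace.GenerateOpen.basic
  refine ⟨∅, {F}, isCompact_empty, finite_singleton F, by simp [hF, hFne], ?_⟩
  simp

theorem isClosed_setOf_sSeparated_s5 {G : Type*} [Group G] [TopologicalSpace G]
    [SeparatelyContinuousMul G] [T2Space G] {U : Set G} (hU : IsOpen U) :
    IsClosed {C : ClosedSubsets G | SSeparated U C.carrier} := by
  rw [← isOpen_compl_iff, isOpen_iff_forall_mem_open]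
  intro C hC
  simp only [mem_compl_iff, mem_ofPred_eq, SSeparated, Set.Subsingleton, not_forall] at hC
  obtain ⟨g, x, ⟨hxC, hxU⟩, y, ⟨hyC, hyU⟩, hxy⟩ := hC
  obtain ⟨V, W, hV, hW, hxV, hyW, hVW⟩ := t2_separation hxy
  have hUg : IsOpen ((· * g⁻¹) '' U) := isOpenMap_mul_right g⁻¹ U hU
  refine ⟨{Y | (Y.carrier ∩ (V ∩ (· * g⁻¹) '' U)).Nonempty} ∩
      {Y | (Y.carrier ∩ (W ∩ (· * g⁻¹) '' U)).Nonempty}, ?_,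
    (ClosedSubsets.isOpen_setOf_inter_nonempty_s5 (hV.inter hUg)).inter
      (ClosedSubsets.isOpen_setOf_inter_nonempty_s5 (hW.inter hUg)),
    ⟨x, hxC, hxV, hxU⟩, ⟨y, hyC, hyW, hyU⟩⟩
  rintro Y ⟨⟨a, haY, haV, haU⟩, ⟨b, hbY, hbW, hbU⟩⟩ hY
  exact hVW.ne_of_mem haV hbW (hY g ⟨haY, haU⟩ ⟨hbY, hbU⟩)

theorem sSeparated_of_mem_hull_general (G : Type*) [Group G] [TopologicalSpace G]
    [IsTopologicalGroup G] [T2Space G]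
    (U : Set G) (hUopen : IsOpen U)
    (L : ClosedSubsets G) (hL : SSeparated U L.carrier) :
    ∀ L' ∈ hull L, SSeparated U L'.carrier :=
  fun _ hL' => closure_minimal (by rintro _ ⟨g, rfl⟩; exact hL.image_mul_right g)
    (isClosed_setOf_sSeparated_s5 hUopen) hL'

/-- If `L` is a `U`-separated closed subset of a lcsc Hausdorff topological
group `G` (`U` open and nonempty), then every element of the hull `Ω_L` is `U`-separated. -/
theorem sSeparated_of_mem_hull (G : Type*) [Group G] [TopologicalSpace G]
    [IsTopologicalGroup G] [LocallyCompactSpace G] [SecondCountableTopology G] [T2Space G]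
    (U : Set G) (hUopen : IsOpen U) (hUne : U.Nonempty)
    (L : ClosedSubsets G) (hL : SSeparated U L.carrier) :
    ∀ L' ∈ hull L, SSeparated U L'.carrier :=
  sSeparated_of_mem_hull_general G U hUopen L hL
end

section
/- Let d ≥ 1 and let αℝᵈ denote the one-point compactification of ℝᵈ, with added point ∞. Every self-homeomorphism f of ℝᵈ extends to a self-homeomorphism f̂ of αℝᵈ with f̂(∞) = ∞, and the map f ↦ f̂ from Homeo(ℝᵈ), with the compact-open topology, to C(αℝᵈ, αℝᵈ), with the compact-open topology, is a topological embedding. In other words, the compact-open topology on Homeo(ℝᵈ) coincides with the topology it inherits from the one-point compactification αℝᵈ. -/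
open Set Topology Filter OnePoint

/-- The compact-open topology on the group of self-homeomorphisms of a space, induced from the
compact-open topology on continuous maps via the inclusion. -/
def homeoCompactOpen (X : Type*) [TopologicalSpace X] : TopologicalSpace (X ≃ₜ X) :=
  TopologicalSpace.induced (fun f : X ≃ₜ X => (f : C(X, X))) ContinuousMap.compactOpen

/-! The extension is `Homeomorph.onePointCongr`. A compact-open condition `f(K) ⊆ V` on `X` is
the compact-open condition `f̂(K) ⊆ V` on `αX`, so the topology inherited from `αX` is at least
as fine. Conversely, a condition `f̂(K) ⊆ V` with `∞ ∈ K` and `∞ ∈ V` says `f(L) ∩ C = ∅` for the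
closed set `L = K ∩ X` and the compact set `C = αX \ V`, and by Arens' lemma such conditions are
open in the compact-open topology when `X` is locally compact, locally connected and Hausdorff:
enclose `f₀⁻¹(C)` in the interior of a compact set `K` disjoint from `L`, and cover `C` by
connected open sets `U` whose closures miss `f₀(∂K)`. If `f` is close to `f₀`, then `f(∂K)` still
misses each `U` while `f(int K)` still meets it, so by connectedness `U ⊆ f(int K)`, which is
disjoint from `f(L)`. -/

theorem IsPreconnected.subset_interior_of_disjoint_frontier {X : Type*} [TopologicalSpace X]
    {s t : Set X} (hs : IsPreconnected s) (hst : (s ∩ interior t).Nonempty)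
    (hfr : Disjoint s (frontier t)) : s ⊆ interior t :=
  hs.subset_of_closure_inter_subset isOpen_interior hst fun x ⟨hxt, hxs⟩ => by
    by_contra hx
    exact hfr.notMem_of_mem_left hxs ⟨closure_mono interior_subset hxt, hx⟩

theorem exists_isOpen_isPreconnected_closure_subset {X : Type*} [TopologicalSpace X]
    [RegularSpace X] [LocallyConnectedSpace X] {x : X} {W : Set X} (hW : W ∈ 𝓝 x) :
    ∃ U, IsOpen U ∧ IsPreconnected U ∧ x ∈ U ∧ closure U ⊆ W := by
  obtain ⟨F, hF, hFc, hFW⟩ := exists_mem_nhds_isClosed_subset hW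
  obtain ⟨U, ⟨hUo, hxU, hUc⟩, hUF⟩ := (LocallyConnectedSpace.open_connected_basis x).mem_iff.1 hF
  exact ⟨U, hUo, hUc.isPreconnected, hxU, (hFc.closure_subset_iff.2 hUF).trans hFW⟩

namespace Homeomorph

variable {X : Type*} [TopologicalSpace X]

theorem isOpen_setOfPred_mapsTo {K U : Set X} (hK : IsCompact K) (hU : IsOpen U) :
    IsOpen[homeoCompactOpen X] {f : X ≃ₜ X | MapsTo f K U} :=
  isOpen_induced (ContinuousMap.isOpen_setOfPred_mapsTo hK hU)

/-- **Arens' lemma.** -/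
theorem isOpen_setOfPred_mapsTo_compl [T2Space X] [LocallyCompactSpace X] [LocallyConnectedSpace X]
    {L C : Set X} (hL : IsClosed L) (hC : IsCompact C) :
    IsOpen[homeoCompactOpen X] {f : X ≃ₜ X | MapsTo f L Cᶜ} := by
  let _ := homeoCompactOpen X
  rw [isOpen_iff_forall_mem_open]
  intro f₀ hf₀
  have hPL : f₀.symm '' C ⊆ Lᶜ := by
    rintro _ ⟨y, hy, rfl⟩ hyL
    exact hf₀ hyL (by rwa [apply_symm_apply])
  obtain ⟨K, hK, hPK, hKL⟩ :=
    exists_compact_between (hC.image f₀.symm.continuous) hL.isOpen_compl hPL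
  have hfrK : IsCompact (frontier K) :=
    hK.of_isClosed_subset isClosed_frontier
      (frontier_subset_closure.trans hK.isClosed.closure_subset)
  have hCW : C ⊆ (f₀ '' frontier K)ᶜ := by
    rintro y hy ⟨x, hx, rfl⟩
    exact hx.2 (hPK ⟨f₀ x, hy, symm_apply_apply f₀ x⟩)
  have hW : IsOpen (f₀ '' frontier K)ᶜ := (hfrK.image f₀.continuous).isClosed.isOpen_compl
  choose! U hUo hUc hcU hUW using fun c (hc : c ∈ C) =>
    exists_isOpen_isPreconnected_closure_subset (hW.mem_nhds (hCW hc))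
  obtain ⟨t, htC, hCt⟩ := hC.elim_nhds_subcover U fun c hc => (hUo c hc).mem_nhds (hcU c hc)
  refine ⟨{f | MapsTo f (frontier K) (⋃ c ∈ t, closure (U c))ᶜ} ∩
    ⋂ c ∈ t, {f | MapsTo f {f₀.symm c} (U c)}, ?_, ?_, ?_⟩
  · rintro f ⟨hfr, hft⟩ x hxL hfxC
    obtain ⟨c, hct, hfxU⟩ := mem_iUnion₂.1 (hCt hfxC)
    have hfc : f (f₀.symm c) ∈ U c := mem_iInter₂.1 hft c hct rfl
    have hUK : f ⁻¹' U c ⊆ interior K :=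
      (f.isPreconnected_preimage.2 (hUc c (htC c hct))).subset_interior_of_disjoint_frontier
        ⟨f₀.symm c, hfc, hPK ⟨c, htC c hct, rfl⟩⟩
        (disjoint_left.2 fun y hyU hyK =>
          hfr hyK (mem_iUnion₂.2 ⟨c, hct, subset_closure hyU⟩))
    exact hKL (interior_subset (hUK hfxU)) hxL
  · exact (isOpen_setOfPred_mapsTo hfrK
      (isClosed_biUnion_finset fun c _ => isClosed_closure).isOpen_compl).inter
      (isOpen_biInter_finset fun c hct =>
        isOpen_setOfPred_mapsTo isCompact_singleton (hUo c (htC c hct)))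
  · refine ⟨?_, mem_iInter₂.2 fun c hct => mapsTo_singleton.2 ?_⟩
    · rintro x hx hxU
      obtain ⟨c, hct, hxc⟩ := mem_iUnion₂.1 hxU
      exact hUW c (htC c hct) hxc ⟨x, hx, rfl⟩
    · simpa using hcU c (htC c hct)

theorem mapsTo_onePointCongr_iff {Y : Type*} [TopologicalSpace Y] (f : X ≃ₜ Y)
    {s : Set (OnePoint X)} {t : Set (OnePoint Y)} (h : ∞ ∈ s → ∞ ∈ t) :
    MapsTo f.onePointCongr s t ↔ MapsTo f ((↑) ⁻¹' s) ((↑) ⁻¹' t) := by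
  refine ⟨fun hf x hx => hf hx, fun hf a ha => ?_⟩
  induction a using OnePoint.rec with
  | infty => exact h ha
  | coe x => exact hf ha

theorem induced_onePointCongr_le_homeoCompactOpen :
    TopologicalSpace.induced (fun f : X ≃ₜ X => (f.onePointCongr : C(OnePoint X, OnePoint X)))
      ContinuousMap.compactOpen ≤ homeoCompactOpen X := by
  let _ := TopologicalSpace.induced
    (fun f : X ≃ₜ X => (f.onePointCongr : C(OnePoint X, OnePoint X))) ContinuousMap.compactOpen
  refine continuous_iff_le_induced.1 (ContinuousMap.continuous_compactOpen.2 fun K hK V hV => ?_)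
  convert isOpen_induced (ContinuousMap.isOpen_setOfPred_mapsTo (hK.image continuous_coe)
    (isOpenMap_coe _ hV)) using 1
  ext f
  change MapsTo f K V ↔ MapsTo f.onePointCongr _ _
  rw [mapsTo_onePointCongr_iff f (by simp), preimage_image_eq _ coe_injective,
    preimage_image_eq _ coe_injective]

theorem continuous_onePointCongr [T2Space X] [LocallyCompactSpace X] [LocallyConnectedSpace X] :
    Continuous[homeoCompactOpen X, ContinuousMap.compactOpen]
      fun f : X ≃ₜ X => (f.onePointCongr : C(OnePoint X, OnePoint X)) := by
  let _ := homeoCompactOpen X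
  refine ContinuousMap.continuous_compactOpen.2 fun K hK V hV => ?_
  by_cases hKV : ∞ ∈ K → ∞ ∈ V
  · simp only [ContinuousMap.coe_coe, mapsTo_onePointCongr_iff _ hKV]
    by_cases hK_infty : ∞ ∈ K
    · rw [← compl_compl (_ ⁻¹' V), ← preimage_compl]
      exact isOpen_setOfPred_mapsTo_compl (hK.isClosed.preimage continuous_coe)
        ((isOpen_iff_of_mem' (hKV hK_infty)).1 hV).1
    · have hK_range : K ⊆ range ((↑) : X → OnePoint X) := by
        rwa [← compl_infty, subset_compl_singleton_iff]
      exact isOpen_setOfPred_mapsTo (isOpenEmbedding_coe.isInducing.isCompact_preimage' hK hK_range)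
        (hV.preimage continuous_coe)
  · convert isOpen_empty
    push Not at hKV
    exact eq_empty_of_forall_notMem fun f hf => hKV.2 (hf hKV.1)

theorem isEmbedding_onePointCongr [T2Space X] [LocallyCompactSpace X] [LocallyConnectedSpace X] :
    letI := homeoCompactOpen X
    IsEmbedding fun f : X ≃ₜ X => (f.onePointCongr : C(OnePoint X, OnePoint X)) := by
  let _ := homeoCompactOpen X
  exact ⟨⟨le_antisymm (continuous_iff_le_induced.1 continuous_onePointCongr)
    induced_onePointCongr_le_homeoCompactOpen⟩,
    fun f g hfg => Homeomorph.ext fun x => coe_injective (DFunLike.congr_fun hfg (x : OnePoint X))⟩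

end Homeomorph

theorem homeo_euclidean_embeds_in_onePoint_general (d : ℕ) :
    letI := homeoCompactOpen (EuclideanSpace ℝ (Fin d))
    ∃ ext : (EuclideanSpace ℝ (Fin d) ≃ₜ EuclideanSpace ℝ (Fin d)) →
        (OnePoint (EuclideanSpace ℝ (Fin d)) ≃ₜ OnePoint (EuclideanSpace ℝ (Fin d))),
      (∀ f, ext f ∞ = ∞) ∧
      (∀ f (x : EuclideanSpace ℝ (Fin d)),
        ext f (x : OnePoint (EuclideanSpace ℝ (Fin d))) =
          ((f x : EuclideanSpace ℝ (Fin d)) : OnePoint (EuclideanSpace ℝ (Fin d)))) ∧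
      Topology.IsEmbedding (fun f =>
        ((ext f : OnePoint (EuclideanSpace ℝ (Fin d)) ≃ₜ OnePoint (EuclideanSpace ℝ (Fin d))) :
          C(OnePoint (EuclideanSpace ℝ (Fin d)), OnePoint (EuclideanSpace ℝ (Fin d))))) :=
  ⟨Homeomorph.onePointCongr, fun _ => rfl, fun _ _ => rfl, Homeomorph.isEmbedding_onePointCongr⟩

/-- For `d ≥ 1`, every self-homeomorphism of `ℝᵈ` extends to a
self-homeomorphism of the one-point compactification `αℝᵈ` fixing `∞`, and the resulting map
from `Homeo(ℝᵈ)` (compact-open topology) into `C(αℝᵈ, αℝᵈ)` (compact-open topology) is a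
topological embedding; i.e. the compact-open topology on `Homeo(ℝᵈ)` coincides with the topology
inherited from the one-point compactification. -/
theorem homeo_euclidean_embeds_in_onePoint (d : ℕ) (hd : 1 ≤ d) :
    letI := homeoCompactOpen (EuclideanSpace ℝ (Fin d))
    ∃ ext : (EuclideanSpace ℝ (Fin d) ≃ₜ EuclideanSpace ℝ (Fin d)) →
        (OnePoint (EuclideanSpace ℝ (Fin d)) ≃ₜ OnePoint (EuclideanSpace ℝ (Fin d))),
      (∀ f, ext f ∞ = ∞) ∧
      (∀ f (x : EuclideanSpace ℝ (Fin d)),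
        ext f (x : OnePoint (EuclideanSpace ℝ (Fin d))) =
          ((f x : EuclideanSpace ℝ (Fin d)) : OnePoint (EuclideanSpace ℝ (Fin d)))) ∧
      Topology.IsEmbedding (fun f =>
        ((ext f : OnePoint (EuclideanSpace ℝ (Fin d)) ≃ₜ OnePoint (EuclideanSpace ℝ (Fin d))) :
          C(OnePoint (EuclideanSpace ℝ (Fin d)), OnePoint (EuclideanSpace ℝ (Fin d))))) :=
  homeo_euclidean_embeds_in_onePoint_general d
end
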